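/- Along any solution of the Cucker–Smale system ẋ = v, v̇ = −L(t,x)v with symmetric nonnegative weights, the velocity standard deviation V(t) = √B(v(t),v(t)) is non-increasing, and the position standard deviation X(t) = √B(x(t),x(t)) satisfies X(t) ≤ X(s) + (t−s) V(s) for all 0 ≤ s ≤ t (weak dissipation: Ẋ ≤ V, V̇ ≤ 0). -/

import Mathlib

/-! Let `W(t)` be the vector of deviations `vᵢ(t) - v̄(t)` in `ℓ²`, so that `V = ‖W‖ / √N`.
Symmetry of the weights makes `L` preserve the mean and gives
`⟪v, L v⟫ = (2N)⁻¹ ∑ᵢⱼ ξᵢⱼ ϕᵢⱼ ‖vᵢ - vⱼ‖² ≥ 0`, so `W` is driven by a force whose inner product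
with `W` is nonnegative. As the solution is only absolutely continuous, the decay of `‖W‖²` is
obtained without differentiating: over `[u, t]` one has `‖W t‖² ≤ ‖W u‖² + 3 (∫ᵤᵗ ‖Ẇ‖)²`, and
summing over fine partitions the quadratic error vanishes. Then
`X(t) ≤ X(s) + ∫ₛᵗ V ≤ X(s) + (t - s) V(s)`. -/

open Finset

noncomputable def Bvar {N d : ℕ} (x y : Fin N → EuclideanSpace ℝ (Fin d)) : ℝ :=
  (N : ℝ)⁻¹ * ∑ i, (inner ℝ (x i) (y i) : ℝ) -
    (inner ℝ ((N : ℝ)⁻¹ • ∑ i, x i) ((N : ℝ)⁻¹ • ∑ i, y i) : ℝ)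

noncomputable def lap {N d : ℕ} (a : Fin N → Fin N → ℝ)
    (y : Fin N → EuclideanSpace ℝ (Fin d)) : Fin N → EuclideanSpace ℝ (Fin d) :=
  fun i => (N : ℝ)⁻¹ • ∑ j, a i j • (y i - y j)

open Set Filter Topology MeasureTheory intervalIntegral
open scoped RealInnerProductSpace

theorem le_of_locally_antitoneOn_Icc {H : ℝ → ℝ} {s t δ : ℝ} (hst : s ≤ t) (hδ : 0 < δ)
    (hH : ∀ u ∈ Icc s t, ∀ u' ∈ Icc s t, u ≤ u' → u' - u < δ → H u' ≤ H u) :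
    H t ≤ H s := by
  obtain ⟨n, hn⟩ := exists_nat_gt ((t - s) / δ)
  have hn0 : (0 : ℝ) < n := lt_of_le_of_lt (div_nonneg (sub_nonneg.2 hst) hδ.le) hn
  set h := (t - s) / n
  have hh : 0 ≤ h := div_nonneg (sub_nonneg.2 hst) hn0.le
  have hhδ : h < δ := by rw [div_lt_iff₀ hn0]; rw [div_lt_iff₀ hδ] at hn; linarith
  have hend : s + n * h = t := by simp only [h]; field_simp; ring
  have hmem : ∀ k ≤ n, s + k * h ∈ Icc s t := fun k hk =>
    ⟨by nlinarith, by rw [← hend]; gcongr⟩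
  have htel := Finset.sum_range_sub (fun k : ℕ => H (s + k * h)) n
  simp only [Nat.cast_zero, zero_mul, add_zero, hend] at htel
  have hstep : ∀ k ∈ range n, H (s + ↑(k + 1) * h) - H (s + k * h) ≤ 0 := by
    intro k hk
    have hk := mem_range.1 hk
    refine sub_nonpos.2 (hH _ (hmem k hk.le) _ (hmem (k + 1) hk) ?_ ?_) <;> push_cast
    · nlinarith
    · linarith
  linarith [sum_nonpos hstep]

theorem antitone_of_le_add_mul_sq_sub {F G : ℝ → ℝ} {C : ℝ} (hGc : Continuous G)
    (hGm : Monotone G) (hF : ∀ u t, u ≤ t → F t ≤ F u + C * (G t - G u) ^ 2) :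
    Antitone F := by
  intro s t hst
  obtain ⟨K, hK, hFK⟩ : ∃ K, 0 ≤ K ∧ ∀ u t, u ≤ t → F t ≤ F u + K * (G t - G u) ^ 2 :=
    ⟨max C 0, le_max_right _ _, fun u t hut =>
      (hF u t hut).trans (by gcongr; exact le_max_left _ _)⟩
  -- On steps where `G` increases by less than `η`, `(ΔG)² ≤ η ΔG`, so `F - K η G` decreases.
  have hη : ∀ η > 0, F t ≤ F s + K * η * (G t - G s) := by
    intro η hη
    obtain ⟨δ, hδ, hGδ⟩ := Metric.uniformContinuousOn_iff.1
      (isCompact_Icc.uniformContinuousOn_of_continuous hGc.continuousOn) η hη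
    suffices F t - K * η * G t ≤ F s - K * η * G s by linarith
    refine le_of_locally_antitoneOn_Icc (H := fun u => F u - K * η * G u) hst hδ
      fun u hu u' hu' huu' hδu => ?_
    have hinc : 0 ≤ G u' - G u := sub_nonneg.2 (hGm huu')
    have hsmall : G u' - G u < η := by
      have := hGδ u' hu' u hu (by rw [Real.dist_eq, abs_of_nonneg (by linarith)]; exact hδu)
      rwa [Real.dist_eq, abs_of_nonneg hinc] at this
    have := hFK u u' huu'
    have : K * (G u' - G u) ^ 2 ≤ K * η * (G u' - G u) := by
      rw [sq, ← mul_assoc, mul_right_comm K η]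
      gcongr
    linarith
  have hlim : Tendsto (fun η => F s + K * η * (G t - G s)) (𝓝[>] 0) (𝓝 (F s)) :=
    tendsto_nhdsWithin_of_tendsto_nhds (Continuous.tendsto' (by fun_prop) _ _ (by simp))
  exact ge_of_tendsto hlim (eventually_nhdsWithin_of_forall hη)

theorem ContinuousLinearMap.intervalIntegrable_comp {E F : Type*} [NormedAddCommGroup E]
    [NormedSpace ℝ E] [NormedAddCommGroup F] [NormedSpace ℝ F] {f : ℝ → E} {a b : ℝ}
    (L : E →L[ℝ] F) (hf : IntervalIntegrable f volume a b) :
    IntervalIntegrable (fun t => L (f t)) volume a b :=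
  ⟨L.integrable_comp hf.1, L.integrable_comp hf.2⟩

section Primitive

variable {E : Type*} [NormedAddCommGroup E] [NormedSpace ℝ E] {w b : ℝ → E} {a : ℝ}

theorem sub_eq_integral_of_eq_add_integral (hb : ∀ t, IntervalIntegrable b volume a t)
    (hw : ∀ t, w t = w a + ∫ s in a..t, b s) (u t : ℝ) :
    w t - w u = ∫ s in u..t, b s := by
  rw [hw t, hw u, add_sub_add_left_eq_sub, integral_interval_sub_left (hb t) (hb u)]

theorem sub_eq_neg_integral_of_eq_sub_integral (hb : ∀ t, IntervalIntegrable b volume a t)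
    (hw : ∀ t, w t = w a - ∫ s in a..t, b s) (u t : ℝ) :
    w t - w u = -∫ s in u..t, b s := by
  rw [hw t, hw u, sub_sub_sub_cancel_left, ← integral_interval_sub_left (hb t) (hb u), neg_sub]

end Primitive

section Dissipation

variable {F : Type*} [NormedAddCommGroup F] [InnerProductSpace ℝ F] [CompleteSpace F]
  {w b : ℝ → F}

theorem norm_sq_le_add_sq_integral_norm {u t : ℝ} (hut : u ≤ t)
    (hb : IntervalIntegrable b volume u t)
    (hw : ∀ r ∈ Icc u t, w r - w u = -∫ s in u..r, b s)
    (hpos : ∀ r ∈ Icc u t, 0 ≤ ⟪w r, b r⟫) :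
    ‖w t‖ ^ 2 ≤ ‖w u‖ ^ 2 + 3 * (∫ r in u..t, ‖b r‖) ^ 2 := by
  set Δ := ∫ r in u..t, ‖b r‖
  set I := ∫ r in u..t, b r
  have hI : ‖I‖ ≤ Δ := intervalIntegral.norm_integral_le_integral_norm hut
  have hdrift : ∀ r ∈ Icc u t, ‖w r - w u‖ ≤ Δ := fun r hr => by
    rw [hw r hr, norm_neg]
    exact (intervalIntegral.norm_integral_le_integral_norm hr.1).trans <|
      integral_mono_interval le_rfl hr.1 hr.2 (Eventually.of_forall fun _ => norm_nonneg _) hb.norm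
  -- `⟪w u, b r⟫` differs from the nonnegative `⟪w r, b r⟫` by at most `Δ * ‖b r‖`.
  have hcross : -(Δ * Δ) ≤ ⟪w u, I⟫ := by
    have hcomm : ∫ r in u..t, ⟪w u, b r⟫ = ⟪w u, I⟫ :=
      (innerSL ℝ (w u)).intervalIntegral_comp_comm hb
    rw [← hcomm, ← neg_mul, ← intervalIntegral.integral_const_mul]
    refine integral_mono_on hut (hb.norm.const_mul _)
      ((innerSL ℝ (w u)).intervalIntegrable_comp hb) fun r hr => ?_
    have hsplit : ⟪w u, b r⟫ = ⟪w r, b r⟫ - ⟪w r - w u, b r⟫ := by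
      rw [inner_sub_left]; ring
    have := real_inner_le_norm (w r - w u) (b r)
    have := mul_le_mul_of_nonneg_right (hdrift r hr) (norm_nonneg (b r))
    linarith [hpos r hr]
  have hwt : w t = w u - I := by
    have h := hw t ⟨hut, le_rfl⟩
    rw [sub_eq_iff_eq_add] at h
    rw [h, neg_add_eq_sub]
  rw [hwt, norm_sub_sq_real]
  nlinarith [norm_nonneg I]

theorem antitone_norm_of_inner_nonneg (hb : ∀ u t, IntervalIntegrable b volume u t)
    (hw : ∀ u t, w t - w u = -∫ s in u..t, b s) (hpos : ∀ t, 0 ≤ ⟪w t, b t⟫) :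
    Antitone fun t => ‖w t‖ := by
  have hsq : Antitone fun t => ‖w t‖ ^ 2 := by
    refine antitone_of_le_add_mul_sq_sub (C := 3) (G := fun t => ∫ r in 0..t, ‖b r‖)
      (continuous_primitive (fun u t => (hb u t).norm) 0) (fun u t hut => ?_) fun u t hut => ?_
    · rw [← sub_nonneg, integral_interval_sub_left (hb 0 t).norm (hb 0 u).norm]
      exact integral_nonneg hut fun _ _ => norm_nonneg _
    · rw [integral_interval_sub_left (hb 0 t).norm (hb 0 u).norm]
      exact norm_sq_le_add_sq_integral_norm hut (hb u t) (fun r _ => hw u r) fun r _ => hpos r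
  exact fun s t hst =>
    (pow_le_pow_iff_left₀ (norm_nonneg _) (norm_nonneg _) two_ne_zero).1 (hsq hst)

end Dissipation

theorem norm_le_add_mul_of_sub_eq_integral {E : Type*} [NormedAddCommGroup E] [NormedSpace ℝ E]
    {y z : ℝ → E} {s t : ℝ} (hst : s ≤ t) (hy : y t - y s = ∫ r in s..t, z r)
    (hz : ∀ r ∈ Icc s t, ‖z r‖ ≤ ‖z s‖) :
    ‖y t‖ ≤ ‖y s‖ + (t - s) * ‖z s‖ := by
  have : ‖y t - y s‖ ≤ ‖z s‖ * (t - s) := by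
    rw [hy, ← abs_of_nonneg (sub_nonneg.2 hst)]
    refine norm_integral_le_of_norm_le_const fun r hr => hz r (Ioc_subset_Icc_self ?_)
    rwa [uIoc_of_le hst] at hr
  linarith [norm_le_insert' (y t) (y s)]

theorem sum_sum_smul_eq_zero_of_symm_of_antisymm {ι M : Type*} [Fintype ι] [AddCommGroup M]
    [Module ℝ M] {c : ι → ι → ℝ} (hc : ∀ i j, c i j = c j i) {f : ι → ι → M} (hf : ∀ i j, f j i = -f i j) :
    ∑ i, ∑ j, c i j • f i j = 0 := by
  set S := ∑ i, ∑ j, c i j • f i j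
  have hS : S = -S :=
    calc S = ∑ i, ∑ j, c j i • f j i := Finset.sum_comm
      _ = -S := by
        simp only [S, ← sum_neg_distrib]
        exact sum_congr rfl fun i _ => sum_congr rfl fun j _ => by rw [hc, hf, smul_neg]
  have h2S : (2 : ℝ) • S = 0 := by rw [two_smul]; nth_rewrite 2 [hS]; exact add_neg_cancel S
  simpa using congrArg ((2 : ℝ)⁻¹ • ·) h2S

section Deviation

variable {N d : ℕ}

noncomputable def deviation (N d : ℕ) :
    (Fin N → EuclideanSpace ℝ (Fin d)) →L[ℝ] PiLp 2 fun _ : Fin N => EuclideanSpace ℝ (Fin d) :=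
  (PiLp.continuousLinearEquiv 2 ℝ _).symm.toContinuousLinearMap ∘L
    (ContinuousLinearMap.id ℝ _ -
      ContinuousLinearMap.pi fun _ => (N : ℝ)⁻¹ • ∑ j, ContinuousLinearMap.proj j)

theorem deviation_apply (y : Fin N → EuclideanSpace ℝ (Fin d)) (i : Fin N) :
    deviation N d y i = y i - (N : ℝ)⁻¹ • ∑ j, y j := by
  simp [deviation]

theorem bvar_self_eq (y : Fin N → EuclideanSpace ℝ (Fin d)) :
    Bvar y y = (N : ℝ)⁻¹ * ‖deviation N d y‖ ^ 2 := by
  rcases Nat.eq_zero_or_pos N with rfl | hN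
  · simp [Bvar]
  obtain ⟨m, hm⟩ : ∃ m, (N : ℝ)⁻¹ • ∑ j, y j = m := ⟨_, rfl⟩
  have hsum : ∑ j, y j = (N : ℝ) • m := by
    rw [← hm, smul_inv_smul₀ (Nat.cast_ne_zero.2 hN.ne')]
  have hnorm : ‖deviation N d y‖ ^ 2 = ∑ i, ‖y i‖ ^ 2 - N * ‖m‖ ^ 2 := by
    rw [PiLp.norm_sq_eq_of_L2]
    simp only [deviation_apply, hm]
    simp only [norm_sub_sq_real, sum_add_distrib, sum_sub_distrib, ← mul_sum,
      ← sum_inner, hsum, real_inner_smul_left, real_inner_self_eq_norm_sq, sum_const, card_univ,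
      Fintype.card_fin, nsmul_eq_mul]
    ring
  simp only [Bvar, hm, hnorm, real_inner_self_eq_norm_sq]
  field_simp

theorem sqrt_bvar_self (y : Fin N → EuclideanSpace ℝ (Fin d)) :
    √(Bvar y y) = √(N : ℝ)⁻¹ * ‖deviation N d y‖ := by
  rw [bvar_self_eq, Real.sqrt_mul (by positivity), Real.sqrt_sq (norm_nonneg _)]

theorem inner_deviation_of_sum_eq_zero (y a : Fin N → EuclideanSpace ℝ (Fin d))
    (ha : ∑ i, a i = 0) :
    ⟪deviation N d y, deviation N d a⟫ = ∑ i, ⟪y i, a i⟫ := by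
  rw [PiLp.inner_apply]
  simp only [deviation_apply, ha, smul_zero, sub_zero, inner_sub_left,
    sum_sub_distrib, ← inner_sum, inner_zero_right]

end Deviation

section Laplacian

variable {N d : ℕ} {c : Fin N → Fin N → ℝ}

theorem sum_lap_eq_zero (hc : ∀ i j, c i j = c j i) (y : Fin N → EuclideanSpace ℝ (Fin d)) :
    ∑ i, lap c y i = 0 := by
  simp only [lap, ← smul_sum,
    sum_sum_smul_eq_zero_of_symm_of_antisymm hc fun i j => (neg_sub (y i) (y j)).symm, smul_zero]

theorem sum_inner_lap_eq (hc : ∀ i j, c i j = c j i) (y : Fin N → EuclideanSpace ℝ (Fin d)) :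
    ∑ i, ⟪y i, lap c y i⟫ = (2 * N : ℝ)⁻¹ * ∑ i, ∑ j, c i j * ‖y i - y j‖ ^ 2 := by
  have hanti := sum_sum_smul_eq_zero_of_symm_of_antisymm hc (f := fun i j => ‖y i‖ ^ 2 - ‖y j‖ ^ 2)
    fun i j => (neg_sub _ _).symm
  have hsplit : ∀ i j, ⟪y i, y i - y j⟫ = ‖y i - y j‖ ^ 2 / 2 + (‖y i‖ ^ 2 - ‖y j‖ ^ 2) / 2 := by
    intro i j
    rw [norm_sub_sq_real, inner_sub_right, real_inner_self_eq_norm_sq, real_inner_comm]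
    ring
  simp only [smul_eq_mul] at hanti
  simp only [lap, real_inner_smul_right, inner_sum, hsplit, ← mul_sum]
  simp only [mul_add, sum_add_distrib, ← mul_div_assoc, ← sum_div, hanti, zero_div, add_zero]
  ring

theorem sum_inner_lap_nonneg (hc : ∀ i j, c i j = c j i) (hc₀ : ∀ i j, 0 ≤ c i j)
    (y : Fin N → EuclideanSpace ℝ (Fin d)) : 0 ≤ ∑ i, ⟪y i, lap c y i⟫ := by
  rw [sum_inner_lap_eq hc]
  exact mul_nonneg (by positivity) (sum_nonneg fun i _ => sum_nonneg fun j _ =>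
    mul_nonneg (hc₀ i j) (sq_nonneg _))

end Laplacian

theorem stmt10_general (N d : ℕ)
    (ξ : ℝ → Fin N → Fin N → ℝ)
    (hξsymm : ∀ t i j, ξ t i j = ξ t j i)
    (hξrange : ∀ t i j, ξ t i j ∈ Set.Icc (0 : ℝ) 1)
    (ϕ : ℝ → ℝ) (hϕpos : ∀ r, 0 ≤ r → 0 < ϕ r)
    (x v : ℝ → Fin N → EuclideanSpace ℝ (Fin d))
    (hvint : ∀ t : ℝ, IntervalIntegrable v MeasureTheory.volume 0 t)
    (haint : ∀ t : ℝ, IntervalIntegrable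
      (fun s => lap (fun i j => ξ s i j * ϕ ‖x s i - x s j‖) (v s))
      MeasureTheory.volume 0 t)
    -- absolutely continuous (Carathéodory) solution of ẋ = v, v̇ = -L(t,x)v
    (hx : ∀ t : ℝ, x t = x 0 + ∫ s in (0:ℝ)..t, v s)
    (hv : ∀ t : ℝ, v t = v 0 -
      ∫ s in (0:ℝ)..t, lap (fun i j => ξ s i j * ϕ ‖x s i - x s j‖) (v s)) :
    ∀ s t : ℝ, 0 ≤ s → s ≤ t →
      Real.sqrt (Bvar (v t) (v t)) ≤ Real.sqrt (Bvar (v s) (v s)) ∧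
      Real.sqrt (Bvar (x t) (x t)) ≤
        Real.sqrt (Bvar (x s) (x s)) + (t - s) * Real.sqrt (Bvar (v s) (v s)) := by
  set c : ℝ → Fin N → Fin N → ℝ := fun s i j => ξ s i j * ϕ ‖x s i - x s j‖
  have hc : ∀ s i j, c s i j = c s j i := fun s i j => by
    simp only [c, hξsymm s i j, norm_sub_rev]
  have hc₀ : ∀ s i j, 0 ≤ c s i j := fun s i j =>
    mul_nonneg (hξrange s i j).1 (hϕpos _ (norm_nonneg _)).le
  have hvint' : ∀ u t, IntervalIntegrable v volume u t := fun u t => (hvint u).symm.trans (hvint t)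
  have haint' : ∀ u t, IntervalIntegrable (fun r => lap (c r) (v r)) volume u t :=
    fun u t => (haint u).symm.trans (haint t)
  have hW : Antitone fun t => ‖deviation N d (v t)‖ := by
    refine antitone_norm_of_inner_nonneg (b := fun t => deviation N d (lap (c t) (v t)))
      (fun u t => (deviation N d).intervalIntegrable_comp (haint' u t)) (fun u t => ?_) fun t => ?_
    · rw [← map_sub, sub_eq_neg_integral_of_eq_sub_integral haint hv, map_neg,
        (deviation N d).intervalIntegral_comp_comm (haint' u t)]
    · rw [inner_deviation_of_sum_eq_zero _ _ (sum_lap_eq_zero (hc t) _)]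
      exact sum_inner_lap_nonneg (hc t) (hc₀ t) _
  intro s t _ hst
  simp only [sqrt_bvar_self]
  refine ⟨mul_le_mul_of_nonneg_left (hW hst) (Real.sqrt_nonneg _), ?_⟩
  have hX : ‖deviation N d (x t)‖ ≤ ‖deviation N d (x s)‖ + (t - s) * ‖deviation N d (v s)‖ := by
    refine norm_le_add_mul_of_sub_eq_integral (y := fun t => deviation N d (x t))
      (z := fun t => deviation N d (v t)) hst ?_ fun r hr => hW hr.1
    rw [← map_sub, sub_eq_integral_of_eq_add_integral hvint hx,
      (deviation N d).intervalIntegral_comp_comm (hvint' s t)]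
  calc √(N : ℝ)⁻¹ * ‖deviation N d (x t)‖
      ≤ √(N : ℝ)⁻¹ * (‖deviation N d (x s)‖ + (t - s) * ‖deviation N d (v s)‖) := by gcongr
    _ = _ := by ring

theorem stmt10 (N d : ℕ) (hN : 1 ≤ N)
    (ξ : ℝ → Fin N → Fin N → ℝ)
    (hξsymm : ∀ t i j, ξ t i j = ξ t j i)
    (hξrange : ∀ t i j, ξ t i j ∈ Set.Icc (0 : ℝ) 1)
    (ϕ : ℝ → ℝ) (hϕ : LipschitzWith 1 ϕ) (hϕpos : ∀ r, 0 ≤ r → 0 < ϕ r)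
    (x v : ℝ → Fin N → EuclideanSpace ℝ (Fin d))
    (hvint : ∀ t : ℝ, IntervalIntegrable v MeasureTheory.volume 0 t)
    (haint : ∀ t : ℝ, IntervalIntegrable
      (fun s => lap (fun i j => ξ s i j * ϕ ‖x s i - x s j‖) (v s))
      MeasureTheory.volume 0 t)
    -- absolutely continuous (Carathéodory) solution of ẋ = v, v̇ = -L(t,x)v
    (hx : ∀ t : ℝ, x t = x 0 + ∫ s in (0:ℝ)..t, v s)
    (hv : ∀ t : ℝ, v t = v 0 -
      ∫ s in (0:ℝ)..t, lap (fun i j => ξ s i j * ϕ ‖x s i - x s j‖) (v s)) :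
    ∀ s t : ℝ, 0 ≤ s → s ≤ t →
      Real.sqrt (Bvar (v t) (v t)) ≤ Real.sqrt (Bvar (v s) (v s)) ∧
      Real.sqrt (Bvar (x t) (x t)) ≤
        Real.sqrt (Bvar (x s) (x s)) + (t - s) * Real.sqrt (Bvar (v s) (v s)) :=
  stmt10_general N d ξ hξsymm hξrange ϕ hϕpos x v hvint haint hx hv
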